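/- arXiv:1704.01449 — 3 statements merged into one kernel-verified Lean document; each statement's English description precedes it below -/
import Mathlib

section
/- (Proposition 1, bound form.) Let n, m ≥ 1, let A_0,…,A_m ∈ ℂ^{n×n}, set P(z) = Σ_{j=0}^m A_j z^j and P'(z) = Σ_{j=1}^m j A_j z^{j-1}. Let λ₀ ∈ ℂ, let x₀, y₀ ∈ ℂ^n be unit vectors with y₀^H P(λ₀) = 0 and y₀^H P'(λ₀) x₀ ≠ 0. Let ω_0,…,ω_m ≥ 0 and let Δ_0,…,Δ_m ∈ ℂ^{n×n} satisfy ‖Δ_j‖_F ≤ ω_j. Suppose λ : ℝ → ℂ and x : ℝ → ℂ^n are differentiable at 0 with λ(0) = λ₀, x(0) = x₀, and Σ_{j=0}^m (A_j + ε Δ_j) λ(ε)^j x(ε) = 0 for all ε in a neighborhood of 0. Then |λ'(0)| ≤ ( Σ_{j=0}^m ω_j |λ₀|^j ) / | y₀^H P'(λ₀) x₀ |. -/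
/-!
Differentiating `∑ⱼ λ(ε)ʲ (Aⱼ + ε Δⱼ) x(ε) = 0` at `ε = 0` gives
`λ'(0) P'(λ₀) x₀ + P(λ₀) x'(0) + (∑ⱼ λ₀ʲ Δⱼ) x₀ = 0`. Pairing with the left eigenvector `y₀`
kills the unknown `x'(0)`, so `λ'(0) · y₀ᴴ P'(λ₀) x₀ = -y₀ᴴ (∑ⱼ λ₀ʲ Δⱼ) x₀`, and by Cauchy–Schwarz
`|y₀ᴴ Δⱼ x₀| ≤ ‖Δⱼ‖_F ≤ ωⱼ` for unit vectors `x₀`, `y₀`.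
-/

noncomputable def frobNorm {n : ℕ} (M : Matrix (Fin n) (Fin n) ℂ) : ℝ :=
  Real.sqrt (∑ i, ∑ j, ‖M i j‖ ^ 2)

open Finset Matrix Filter Topology

section CauchySchwarz

variable {ι κ R : Type*} [Fintype ι] [Fintype κ] [NormedRing R]

lemma norm_dotProduct_sq_le (v w : ι → R) :
    ‖v ⬝ᵥ w‖ ^ 2 ≤ (∑ i, ‖v i‖ ^ 2) * ∑ i, ‖w i‖ ^ 2 :=
  calc ‖v ⬝ᵥ w‖ ^ 2 ≤ (∑ i, ‖v i‖ * ‖w i‖) ^ 2 := by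
        gcongr
        exact (norm_sum_le _ _).trans (sum_le_sum fun i _ => norm_mul_le _ _)
    _ ≤ _ := sum_mul_sq_le_sq_mul_sq _ _ _

lemma sum_norm_mulVec_sq_le (M : Matrix ι κ R) (x : κ → R) :
    ∑ i, ‖(M *ᵥ x) i‖ ^ 2 ≤ (∑ i, ∑ k, ‖M i k‖ ^ 2) * ∑ k, ‖x k‖ ^ 2 := by
  rw [sum_mul]
  exact sum_le_sum fun i _ => norm_dotProduct_sq_le (M i) x

end CauchySchwarz

lemma norm_star_dotProduct_mulVec_le_frobNorm {n : ℕ} (M : Matrix (Fin n) (Fin n) ℂ)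
    {x y : Fin n → ℂ} (hx : ∑ i, ‖x i‖ ^ 2 = 1) (hy : ∑ i, ‖y i‖ ^ 2 = 1) :
    ‖star y ⬝ᵥ M *ᵥ x‖ ≤ frobNorm M := by
  rw [frobNorm, ← Real.sqrt_sq (norm_nonneg _)]
  gcongr
  calc ‖star y ⬝ᵥ M *ᵥ x‖ ^ 2 ≤ (∑ i, ‖star y i‖ ^ 2) * ∑ i, ‖(M *ᵥ x) i‖ ^ 2 :=
        norm_dotProduct_sq_le _ _
    _ ≤ 1 * ((∑ i, ∑ k, ‖M i k‖ ^ 2) * 1) := by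
        simp only [Pi.star_apply, norm_star, hy]
        gcongr
        exact hx ▸ sum_norm_mulVec_sq_le M x
    _ = ∑ i, ∑ k, ‖M i k‖ ^ 2 := by ring

lemma HasDerivAt.const_mulVec {ι κ : Type*} [Fintype κ] (M : Matrix ι κ ℂ) {x : ℝ → κ → ℂ}
    {x' : κ → ℂ} {t : ℝ} (hx : HasDerivAt x x' t) :
    HasDerivAt (fun s => M *ᵥ x s) (M *ᵥ x') t :=
  hasDerivAt_pi.2 fun i =>
    HasDerivAt.fun_sum fun k _ => (hasDerivAt_pi.1 hx k).const_mul (M i k)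

section MatrixPolynomial

variable {ι : Type*} [Fintype ι]

def matPolyEval (m : ℕ) (A : ℕ → Matrix ι ι ℂ) (z : ℂ) : Matrix ι ι ℂ :=
  ∑ j ∈ range (m + 1), z ^ j • A j

/-- The `j = 0` term vanishes through its factor `(0 : ℂ)`, despite `0 - 1 = 0` in `ℕ`. -/
def matPolyDeriv (m : ℕ) (A : ℕ → Matrix ι ι ℂ) (z : ℂ) : Matrix ι ι ℂ :=
  ∑ j ∈ range (m + 1), ((j : ℂ) * z ^ (j - 1)) • A j

lemma hasDerivAt_perturbed_mulVec (A Δ : Matrix ι ι ℂ) {x : ℝ → ι → ℂ} {x' : ι → ℂ}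
    (hx : HasDerivAt x x' 0) :
    HasDerivAt (fun ε : ℝ => (A + (ε : ℂ) • Δ) *ᵥ x ε) (A *ᵥ x' + Δ *ᵥ x 0) 0 := by
  have hsplit : (fun ε : ℝ => (A + (ε : ℂ) • Δ) *ᵥ x ε)
      = fun ε => A *ᵥ x ε + Complex.ofRealCLM ε • Δ *ᵥ x ε := by
    ext1 ε
    rw [add_mulVec, smul_mulVec]
    rfl
  rw [hsplit]
  refine ((hx.const_mulVec A).fun_add
    (Complex.ofRealCLM.hasDerivAt.fun_smul (hx.const_mulVec Δ))).congr_deriv ?_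
  simp

lemma hasDerivAt_perturbed_matPoly_mulVec (m : ℕ) (A Δ : ℕ → Matrix ι ι ℂ)
    {lam : ℝ → ℂ} {x : ℝ → ι → ℂ} {lam' : ℂ} {x' : ι → ℂ}
    (hlam : HasDerivAt lam lam' 0) (hx : HasDerivAt x x' 0) :
    HasDerivAt (fun ε : ℝ => ∑ j ∈ range (m + 1), lam ε ^ j • (A j + (ε : ℂ) • Δ j) *ᵥ x ε)
      (lam' • matPolyDeriv m A (lam 0) *ᵥ x 0 + matPolyEval m A (lam 0) *ᵥ x'
        + matPolyEval m Δ (lam 0) *ᵥ x 0) 0 := by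
  refine (HasDerivAt.fun_sum fun j (_ : j ∈ range (m + 1)) =>
    (hlam.fun_pow j).smul (hasDerivAt_perturbed_mulVec (A j) (Δ j) hx)).congr_deriv ?_
  simp only [matPolyDeriv, matPolyEval, sum_mulVec, smul_mulVec, smul_sum,
    ← sum_add_distrib, Complex.ofReal_zero, zero_smul, add_zero]
  refine sum_congr rfl fun j _ => ?_
  module

theorem perturbed_matPoly_first_order (m : ℕ) (A Δ : ℕ → Matrix ι ι ℂ)
    {lam : ℝ → ℂ} {x : ℝ → ι → ℂ} {lam' : ℂ} {x' : ι → ℂ}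
    (hlam : HasDerivAt lam lam' 0) (hx : HasDerivAt x x' 0)
    (heq : ∀ᶠ ε in 𝓝 (0 : ℝ), ∑ j ∈ range (m + 1), lam ε ^ j • (A j + (ε : ℂ) • Δ j) *ᵥ x ε = 0) :
    lam' • matPolyDeriv m A (lam 0) *ᵥ x 0 + matPolyEval m A (lam 0) *ᵥ x'
      + matPolyEval m Δ (lam 0) *ᵥ x 0 = 0 :=
  (hasDerivAt_perturbed_matPoly_mulVec m A Δ hlam hx).unique
    ((hasDerivAt_const (0 : ℝ) (0 : ι → ℂ)).congr_of_eventuallyEq heq)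

end MatrixPolynomial

lemma norm_star_dotProduct_matPolyEval_mulVec_le {n m : ℕ} {Δ : ℕ → Matrix (Fin n) (Fin n) ℂ}
    {ω : ℕ → ℝ} {x y : Fin n → ℂ} (z : ℂ) (hx : ∑ i, ‖x i‖ ^ 2 = 1) (hy : ∑ i, ‖y i‖ ^ 2 = 1)
    (hΔ : ∀ j ≤ m, frobNorm (Δ j) ≤ ω j) :
    ‖star y ⬝ᵥ matPolyEval m Δ z *ᵥ x‖ ≤ ∑ j ∈ range (m + 1), ω j * ‖z‖ ^ j := by
  rw [matPolyEval, sum_mulVec, dotProduct_sum]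
  refine (norm_sum_le _ _).trans (sum_le_sum fun j hj => ?_)
  rw [smul_mulVec, dotProduct_smul, smul_eq_mul, norm_mul, norm_pow, mul_comm]
  gcongr
  exact (norm_star_dotProduct_mulVec_le_frobNorm _ hx hy).trans
    (hΔ j (Nat.lt_succ_iff.1 (mem_range.1 hj)))

theorem statement_3_general {n m : ℕ}
    (A : ℕ → Matrix (Fin n) (Fin n) ℂ)
    (lam₀ lam' : ℂ) (x₀ y₀ : Fin n → ℂ)
    (hx₀ : ∑ i, ‖x₀ i‖ ^ 2 = 1) (hy₀ : ∑ i, ‖y₀ i‖ ^ 2 = 1)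
    (hleft : Matrix.vecMul (star y₀) (∑ j ∈ Finset.range (m + 1), lam₀ ^ j • A j) = 0)
    (hsimple : dotProduct (star y₀)
      (Matrix.mulVec (∑ j ∈ Finset.range (m + 1), ((j : ℂ) * lam₀ ^ (j - 1)) • A j) x₀) ≠ 0)
    (ω : ℕ → ℝ)
    (Δ : ℕ → Matrix (Fin n) (Fin n) ℂ)
    (hΔ : ∀ j, j ≤ m → frobNorm (Δ j) ≤ ω j)
    (lam : ℝ → ℂ) (x : ℝ → Fin n → ℂ) (x' : Fin n → ℂ)
    (hlam : HasDerivAt lam lam' 0) (hx : HasDerivAt x x' 0)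
    (hlam0 : lam 0 = lam₀) (hx0 : x 0 = x₀)
    (heq : ∀ᶠ ε in nhds (0 : ℝ), ∑ j ∈ Finset.range (m + 1),
      lam ε ^ j • Matrix.mulVec (A j + (ε : ℂ) • Δ j) (x ε) = 0) :
    ‖lam'‖ ≤ (∑ j ∈ Finset.range (m + 1), ω j * ‖lam₀‖ ^ j) /
      ‖(dotProduct (star y₀)
        (Matrix.mulVec (∑ j ∈ Finset.range (m + 1), ((j : ℂ) * lam₀ ^ (j - 1)) • A j) x₀))‖ := by
  change star y₀ ᵥ* matPolyEval m A lam₀ = 0 at hleft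
  change star y₀ ⬝ᵥ matPolyDeriv m A lam₀ *ᵥ x₀ ≠ 0 at hsimple
  change ‖lam'‖ ≤ _ / ‖star y₀ ⬝ᵥ matPolyDeriv m A lam₀ *ᵥ x₀‖
  have hfirst := perturbed_matPoly_first_order m A Δ hlam hx heq
  rw [hlam0, hx0] at hfirst
  have hPx' : star y₀ ⬝ᵥ matPolyEval m A lam₀ *ᵥ x' = 0 := by
    rw [dotProduct_mulVec, hleft, zero_dotProduct]
  have hpaired : lam' * (star y₀ ⬝ᵥ matPolyDeriv m A lam₀ *ᵥ x₀)
      = -(star y₀ ⬝ᵥ matPolyEval m Δ lam₀ *ᵥ x₀) := by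
    have := congrArg (star y₀ ⬝ᵥ ·) hfirst
    simp only [dotProduct_add, dotProduct_smul, hPx', dotProduct_zero, smul_eq_mul] at this
    linear_combination this
  rw [le_div_iff₀ (norm_pos_iff.2 hsimple), ← norm_mul, hpaired, norm_neg]
  exact norm_star_dotProduct_matPolyEval_mulVec_le lam₀ hx₀ hy₀ hΔ

/-- Proposition 1, bound form: for a simple eigenvalue `lam₀` of the
matrix polynomial `P(z) = ∑_{j=0}^m A_j z^j` and perturbations `‖Δ_j‖_F ≤ ω_j`,
`|λ'(0)| ≤ (∑_{j=0}^m ω_j |lam₀|^j) / |y₀ᴴ P'(lam₀) x₀|`. -/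
theorem statement_3 {n m : ℕ} (hn : 1 ≤ n) (hm : 1 ≤ m)
    (A : ℕ → Matrix (Fin n) (Fin n) ℂ)
    (lam₀ lam' : ℂ) (x₀ y₀ : Fin n → ℂ)
    (hx₀ : ∑ i, ‖x₀ i‖ ^ 2 = 1) (hy₀ : ∑ i, ‖y₀ i‖ ^ 2 = 1)
    (hleft : Matrix.vecMul (star y₀) (∑ j ∈ Finset.range (m + 1), lam₀ ^ j • A j) = 0)
    (hsimple : dotProduct (star y₀)
      (Matrix.mulVec (∑ j ∈ Finset.range (m + 1), ((j : ℂ) * lam₀ ^ (j - 1)) • A j) x₀) ≠ 0)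
    (ω : ℕ → ℝ) (hω : ∀ j, j ≤ m → 0 ≤ ω j)
    (Δ : ℕ → Matrix (Fin n) (Fin n) ℂ)
    (hΔ : ∀ j, j ≤ m → frobNorm (Δ j) ≤ ω j)
    (lam : ℝ → ℂ) (x : ℝ → Fin n → ℂ) (x' : Fin n → ℂ)
    (hlam : HasDerivAt lam lam' 0) (hx : HasDerivAt x x' 0)
    (hlam0 : lam 0 = lam₀) (hx0 : x 0 = x₀)
    (heq : ∀ᶠ ε in nhds (0 : ℝ), ∑ j ∈ Finset.range (m + 1),
      lam ε ^ j • Matrix.mulVec (A j + (ε : ℂ) • Δ j) (x ε) = 0) :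
    ‖lam'‖ ≤ (∑ j ∈ Finset.range (m + 1), ω j * ‖lam₀‖ ^ j) /
      ‖(dotProduct (star y₀)
        (Matrix.mulVec (∑ j ∈ Finset.range (m + 1), ((j : ℂ) * lam₀ ^ (j - 1)) • A j) x₀))‖ :=
  statement_3_general A lam₀ lam' x₀ y₀ hx₀ hy₀ hleft hsimple ω Δ hΔ lam x x' hlam hx hlam0 hx0 heq
end

section
/- (Proposition 1, attainment.) Let n, m ≥ 1, let A_0,…,A_m ∈ ℂ^{n×n}, set P(z) = Σ_{j=0}^m A_j z^j and P'(z) = Σ_{j=1}^m j A_j z^{j-1}. Let λ₀ ∈ ℂ, let x₀, y₀ ∈ ℂ^n be unit vectors with y₀^H P(λ₀) = 0 and y₀^H P'(λ₀) x₀ ≠ 0. Let ω_0,…,ω_m ≥ 0, let η ∈ ℂ with |η| = 1, and define the maximal perturbations Δ_j = η ω_j e^{-i j arg(λ₀)} y₀ x₀^H for j = 0,…,m. Suppose λ : ℝ → ℂ and x : ℝ → ℂ^n are differentiable at 0 with λ(0) = λ₀, x(0) = x₀, and Σ_{j=0}^m (A_j + ε Δ_j) λ(ε)^j x(ε) = 0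 for all ε in a neighborhood of 0. Then |λ'(0)| = ( Σ_{j=0}^m ω_j |λ₀|^j ) / | y₀^H P'(λ₀) x₀ |. -/
/-!
Differentiating the eigen-equation at `ε = 0` and pairing it with the left eigenvector `y₀`
kills the term `y₀ᴴ P(λ₀) x'(0)` and leaves the first-order identity
`λ'(0) · y₀ᴴ P'(λ₀) x₀ = -∑ λ₀ʲ y₀ᴴ Δⱼ x₀`. For the rank-one perturbations `Δⱼ` the phase
`e^{-ij arg λ₀}` turns each `λ₀ʲ` into `|λ₀|ʲ`, so the right-hand side is `-η ∑ ωⱼ |λ₀|ʲ`,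
whose modulus is the numerator of the claimed formula.
-/

open Matrix Filter Topology

theorem HasDerivAt.matrix_mulVec {𝕜 𝔸 : Type*} [NontriviallyNormedField 𝕜] [NormedCommRing 𝔸]
    [NormedAlgebra 𝕜 𝔸] {m n : Type*} [Fintype m] [Fintype n] (M : Matrix m n 𝔸)
    {x : 𝕜 → n → 𝔸} {x' : n → 𝔸} {t : 𝕜} (hx : HasDerivAt x x' t) :
    HasDerivAt (fun s => M *ᵥ x s) (M *ᵥ x') t :=
  hasDerivAt_pi.2 fun i =>
    HasDerivAt.fun_sum fun k _ => (hasDerivAt_pi.1 hx k).const_mul (M i k)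

theorem Complex.pow_mul_exp_neg_arg (z : ℂ) (j : ℕ) :
    z ^ j * exp (-(I * j * z.arg)) = (‖z‖ : ℂ) ^ j := by
  nth_rw 1 [← norm_mul_exp_arg_mul_I z]
  rw [mul_pow, mul_assoc, ← exp_nat_mul, ← exp_add,
    show (j : ℂ) * (z.arg * I) + -(I * j * z.arg) = 0 by ring, exp_zero, mul_one]

theorem star_dotProduct_self_eq_sum_norm_sq {ι : Type*} [Fintype ι] (v : ι → ℂ) :
    star v ⬝ᵥ v = ((∑ i, ‖v i‖ ^ 2 : ℝ) : ℂ) := by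
  simp [dotProduct, Complex.conj_mul']

theorem star_dotProduct_smul_vecMulVec_mulVec {ι R : Type*} [Fintype ι] [CommRing R] [StarRing R]
    (c : R) (x y : ι → R) :
    star y ⬝ᵥ (c • vecMulVec y (star x)) *ᵥ x = c * (star y ⬝ᵥ y) * (star x ⬝ᵥ x) := by
  rw [smul_mulVec, vecMulVec_mulVec, dotProduct_smul, dotProduct_smul]
  simp [mul_comm, mul_left_comm]

section Perturbation

variable {ι : Type*} [Fintype ι] (s : Finset ℕ) (A Δ : ℕ → Matrix ι ι ℂ)
  {lam : ℝ → ℂ} {x : ℝ → ι → ℂ} {lam' : ℂ} {x' : ι → ℂ}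

theorem hasDerivAt_perturbed_residual (hlam : HasDerivAt lam lam' 0) (hx : HasDerivAt x x' 0) :
    HasDerivAt (fun ε : ℝ => ∑ j ∈ s, lam ε ^ j • (A j + (ε : ℂ) • Δ j) *ᵥ x ε)
      (∑ j ∈ s, (((j : ℂ) * lam 0 ^ (j - 1) * lam') • A j *ᵥ x 0 +
        lam 0 ^ j • (A j *ᵥ x' + Δ j *ᵥ x 0))) 0 := by
  refine HasDerivAt.fun_sum fun j _ => ?_
  have hε : HasDerivAt (fun ε : ℝ => (ε : ℂ)) 1 0 := (hasDerivAt_id _).ofReal_comp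
  have hmat : HasDerivAt (fun ε : ℝ => (A j + (ε : ℂ) • Δ j) *ᵥ x ε)
      (A j *ᵥ x' + Δ j *ᵥ x 0) 0 := by
    simp only [add_mulVec, smul_mulVec]
    refine ((hx.matrix_mulVec (A j)).fun_add
      (hε.fun_smul (hx.matrix_mulVec (Δ j)))).congr_deriv ?_
    simp
  refine ((hlam.fun_pow j).fun_smul hmat).congr_deriv ?_
  simp only [Complex.ofReal_zero, zero_smul, add_zero]
  exact add_comm _ _

theorem first_order_eigenvalue_perturbation (w : ι → ℂ) {lam₀ : ℂ} {x₀ : ι → ℂ}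
    (hleft : w ᵥ* ∑ j ∈ s, lam₀ ^ j • A j = 0)
    (hlam : HasDerivAt lam lam' 0) (hx : HasDerivAt x x' 0) (hlam0 : lam 0 = lam₀)
    (hx0 : x 0 = x₀)
    (heq : ∀ᶠ ε in 𝓝 (0 : ℝ), ∑ j ∈ s, lam ε ^ j • (A j + (ε : ℂ) • Δ j) *ᵥ x ε = 0) :
    lam' * (w ⬝ᵥ (∑ j ∈ s, ((j : ℂ) * lam₀ ^ (j - 1)) • A j) *ᵥ x₀) +
      ∑ j ∈ s, lam₀ ^ j * (w ⬝ᵥ Δ j *ᵥ x₀) = 0 := by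
  subst hlam0 hx0
  have hres := hasDerivAt_perturbed_residual s A Δ hlam hx
  have hderiv_zero :=
    hres.unique ((hasDerivAt_const (0 : ℝ) (0 : ι → ℂ)).congr_of_eventuallyEq heq)
  have hP : w ⬝ᵥ (∑ j ∈ s, lam 0 ^ j • A j) *ᵥ x' = 0 := by
    rw [dotProduct_mulVec, hleft, zero_dotProduct]
  have hsum := congrArg (w ⬝ᵥ ·) hderiv_zero
  simp only [dotProduct_zero, dotProduct_sum, dotProduct_add, dotProduct_smul, smul_eq_mul,
    mul_add, Finset.sum_add_distrib] at hsum
  simp only [sum_mulVec, smul_mulVec, dotProduct_sum, dotProduct_smul, smul_eq_mul] at hP ⊢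
  have hlam' : lam' * ∑ j ∈ s, (j : ℂ) * lam 0 ^ (j - 1) * (w ⬝ᵥ A j *ᵥ x 0) =
      ∑ j ∈ s, (j : ℂ) * lam 0 ^ (j - 1) * lam' * (w ⬝ᵥ A j *ᵥ x 0) := by
    rw [Finset.mul_sum]
    exact Finset.sum_congr rfl fun j _ => by ring
  linear_combination hsum + hlam' - hP

end Perturbation

theorem statement_4_general {n m : ℕ}
    (A : ℕ → Matrix (Fin n) (Fin n) ℂ)
    (lam₀ lam' : ℂ) (x₀ y₀ : Fin n → ℂ)
    (hx₀ : ∑ i, ‖x₀ i‖ ^ 2 = 1) (hy₀ : ∑ i, ‖y₀ i‖ ^ 2 = 1)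
    (hleft : Matrix.vecMul (star y₀) (∑ j ∈ Finset.range (m + 1), lam₀ ^ j • A j) = 0)
    (hsimple : dotProduct (star y₀)
      (Matrix.mulVec (∑ j ∈ Finset.range (m + 1), ((j : ℂ) * lam₀ ^ (j - 1)) • A j) x₀) ≠ 0)
    (ω : ℕ → ℝ) (hω : ∀ j, j ≤ m → 0 ≤ ω j)
    (η : ℂ) (hη : ‖η‖ = 1)
    (Δ : ℕ → Matrix (Fin n) (Fin n) ℂ)
    (hΔ : ∀ j, Δ j = (η * (ω j : ℂ) *
      Complex.exp (-(Complex.I * (j : ℂ) * (lam₀.arg : ℂ)))) • Matrix.vecMulVec y₀ (star x₀))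
    (lam : ℝ → ℂ) (x : ℝ → Fin n → ℂ) (x' : Fin n → ℂ)
    (hlam : HasDerivAt lam lam' 0) (hx : HasDerivAt x x' 0)
    (hlam0 : lam 0 = lam₀) (hx0 : x 0 = x₀)
    (heq : ∀ᶠ ε in nhds (0 : ℝ), ∑ j ∈ Finset.range (m + 1),
      lam ε ^ j • Matrix.mulVec (A j + (ε : ℂ) • Δ j) (x ε) = 0) :
    ‖lam'‖ = (∑ j ∈ Finset.range (m + 1), ω j * ‖lam₀‖ ^ j) /
      ‖dotProduct (star y₀)
        (Matrix.mulVec (∑ j ∈ Finset.range (m + 1), ((j : ℂ) * lam₀ ^ (j - 1)) • A j) x₀)‖ := by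
  set S := star y₀ ⬝ᵥ (∑ j ∈ Finset.range (m + 1), ((j : ℂ) * lam₀ ^ (j - 1)) • A j) *ᵥ x₀
  set T := ∑ j ∈ Finset.range (m + 1), ω j * ‖lam₀‖ ^ j
  have hT : 0 ≤ T := Finset.sum_nonneg fun j hj =>
    mul_nonneg (hω j (Finset.mem_range_succ_iff.mp hj)) (by positivity)
  have hunit : ∀ v : Fin n → ℂ, ∑ i, ‖v i‖ ^ 2 = 1 → star v ⬝ᵥ v = 1 := fun v hv => by
    rw [star_dotProduct_self_eq_sum_norm_sq, hv, Complex.ofReal_one]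
  have hΔ_term : ∀ j, lam₀ ^ j * (star y₀ ⬝ᵥ Δ j *ᵥ x₀) = η * ((ω j * ‖lam₀‖ ^ j : ℝ) : ℂ) := by
    intro j
    rw [hΔ, star_dotProduct_smul_vecMulVec_mulVec, hunit x₀ hx₀, hunit y₀ hy₀]
    push_cast
    linear_combination η * ω j * Complex.pow_mul_exp_neg_arg lam₀ j
  have hfirst := first_order_eigenvalue_perturbation _ A Δ (star y₀) hleft hlam hx hlam0 hx0 heq
  simp only [hΔ_term, ← Finset.mul_sum, ← Complex.ofReal_sum] at hfirst
  have hnorm : ‖lam'‖ * ‖S‖ = T := by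
    rw [← norm_mul, eq_neg_of_add_eq_zero_left hfirst, norm_neg, norm_mul, hη, one_mul,
      Complex.norm_real, Real.norm_of_nonneg hT]
  rw [eq_div_iff (norm_ne_zero_iff.mpr hsimple), hnorm]

/-- Proposition 1, attainment: for the maximal perturbations
`Δ_j = η ω_j e^{-i j arg(lam₀)} y₀ x₀ᴴ`, the first-order eigenvalue perturbation
attains the bound: `|λ'(0)| = (∑_{j=0}^m ω_j |lam₀|^j) / |y₀ᴴ P'(lam₀) x₀|`. -/
theorem statement_4 {n m : ℕ} (hn : 1 ≤ n) (hm : 1 ≤ m)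
    (A : ℕ → Matrix (Fin n) (Fin n) ℂ)
    (lam₀ lam' : ℂ) (x₀ y₀ : Fin n → ℂ)
    (hx₀ : ∑ i, ‖x₀ i‖ ^ 2 = 1) (hy₀ : ∑ i, ‖y₀ i‖ ^ 2 = 1)
    (hleft : Matrix.vecMul (star y₀) (∑ j ∈ Finset.range (m + 1), lam₀ ^ j • A j) = 0)
    (hsimple : dotProduct (star y₀)
      (Matrix.mulVec (∑ j ∈ Finset.range (m + 1), ((j : ℂ) * lam₀ ^ (j - 1)) • A j) x₀) ≠ 0)
    (ω : ℕ → ℝ) (hω : ∀ j, j ≤ m → 0 ≤ ω j)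
    (η : ℂ) (hη : ‖η‖ = 1)
    (Δ : ℕ → Matrix (Fin n) (Fin n) ℂ)
    (hΔ : ∀ j, Δ j = (η * (ω j : ℂ) *
      Complex.exp (-(Complex.I * (j : ℂ) * (lam₀.arg : ℂ)))) • Matrix.vecMulVec y₀ (star x₀))
    (lam : ℝ → ℂ) (x : ℝ → Fin n → ℂ) (x' : Fin n → ℂ)
    (hlam : HasDerivAt lam lam' 0) (hx : HasDerivAt x x' 0)
    (hlam0 : lam 0 = lam₀) (hx0 : x 0 = x₀)
    (heq : ∀ᶠ ε in nhds (0 : ℝ), ∑ j ∈ Finset.range (m + 1),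
      lam ε ^ j • Matrix.mulVec (A j + (ε : ℂ) • Δ j) (x ε) = 0) :
    ‖lam'‖ = (∑ j ∈ Finset.range (m + 1), ω j * ‖lam₀‖ ^ j) /
      ‖dotProduct (star y₀)
        (Matrix.mulVec (∑ j ∈ Finset.range (m + 1), ((j : ℂ) * lam₀ ^ (j - 1)) • A j) x₀)‖ :=
  statement_4_general A lam₀ lam' x₀ y₀ hx₀ hy₀ hleft hsimple ω hω η hη Δ hΔ lam x x' hlam hx hlam0
    hx0 heq
end

section
/- Let S_0,…,S_m be ℂ-linear subspaces of ℂ^{n×n}, let λ ∈ ℂ, let x, y ∈ ℂ^n be unit vectors such that (y x^H)|_{S_j} ≠ 0 for each j, let ω_0,…,ω_m ≥ 0, and let η ∈ ℂ with |η| = 1. Define Δ_j = η ω_j e^{-i j arg(λ)} (y x^H)|_{S_j} / ‖(y x^H)|_{S_j}‖_F for j = 0,…,m. Then Δ_j ∈ S_j, ‖Δ_j‖_F = ω_j for every j, and | Σ_{j=0}^m λ^j (y^H Δ_j x) | = Σ_{j=0}^m ω_j ‖(y x^H)|_{S_j}‖_F |λ|^j. -/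
/-- The Frobenius inner product of two complex matrices. -/
noncomputable def frobInner {n : ℕ} (A B : Matrix (Fin n) (Fin n) ℂ) : ℂ :=
  ∑ i, ∑ j, (starRingEnd ℂ) (A i j) * B i j

/-!
Since `y xᴴ - p_j` is orthogonal to `S_j ∋ p_j`, we get
`yᴴ p_j x = ⟨y xᴴ, p_j⟩_F = ‖p_j‖_F²`. The factor `e^{-i j arg λ}` turns `λ^j` into `|λ|^j`,
so every term `λ^j yᴴ Δ_j x` equals `η` times the nonnegative real `ω_j ‖p_j‖_F |λ|^j`;
all terms have the same phase and the norm of the sum is the sum of the norms.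
-/

open Matrix Complex

section Frobenius

attribute [local instance] Matrix.frobeniusNormedAddCommGroup Matrix.frobeniusNormedSpace

lemma frobNorm_eq_norm {n : ℕ} (M : Matrix (Fin n) (Fin n) ℂ) : frobNorm M = ‖M‖ := by
  rw [frobNorm, frobenius_norm_def, Real.sqrt_eq_rpow]
  norm_cast

lemma frobNorm_smul {n : ℕ} (c : ℂ) (M : Matrix (Fin n) (Fin n) ℂ) :
    frobNorm (c • M) = ‖c‖ * frobNorm M := by
  simp only [frobNorm_eq_norm, norm_smul]

lemma frobNorm_pos {n : ℕ} {M : Matrix (Fin n) (Fin n) ℂ} (h : M ≠ 0) : 0 < frobNorm M := by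
  rw [frobNorm_eq_norm]
  exact norm_pos_iff.mpr h

end Frobenius

lemma frobInner_sub_left {n : ℕ} (A B C : Matrix (Fin n) (Fin n) ℂ) :
    frobInner (A - B) C = frobInner A C - frobInner B C := by
  simp only [frobInner, Matrix.sub_apply, map_sub, sub_mul, Finset.sum_sub_distrib]

lemma frobInner_self {n : ℕ} (M : Matrix (Fin n) (Fin n) ℂ) :
    frobInner M M = ((frobNorm M ^ 2 : ℝ) : ℂ) := by
  rw [frobNorm, Real.sq_sqrt (by positivity), frobInner]
  push_cast
  simp only [conj_mul']

lemma frobInner_vecMulVec {n : ℕ} (x y : Fin n → ℂ) (B : Matrix (Fin n) (Fin n) ℂ) :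
    frobInner (vecMulVec y (star x)) B = star y ⬝ᵥ B *ᵥ x := by
  simp only [frobInner, vecMulVec_apply, dotProduct, mulVec, Finset.mul_sum, map_mul,
    Pi.star_apply, RCLike.star_def, conj_conj]
  refine Finset.sum_congr rfl fun i _ => Finset.sum_congr rfl fun j _ => ?_
  ring

lemma star_dotProduct_mulVec_eq_frobNorm_sq {n : ℕ} {x y : Fin n → ℂ}
    {P : Matrix (Fin n) (Fin n) ℂ} (h : frobInner (vecMulVec y (star x) - P) P = 0) :
    star y ⬝ᵥ P *ᵥ x = ((frobNorm P ^ 2 : ℝ) : ℂ) := by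
  rwa [frobInner_sub_left, sub_eq_zero, frobInner_vecMulVec, frobInner_self] at h

lemma norm_exp_neg_I_mul_nat_mul_arg (lam : ℂ) (j : ℕ) :
    ‖exp (-(I * j * lam.arg))‖ = 1 := by
  rw [show -(I * j * lam.arg) = I * ((-(j * lam.arg) : ℝ) : ℂ) by push_cast; ring,
    norm_exp_I_mul_ofReal]

lemma pow_mul_exp_neg_I_mul_nat_mul_arg (lam : ℂ) (j : ℕ) :
    lam ^ j * exp (-(I * j * lam.arg)) = ((‖lam‖ ^ j : ℝ) : ℂ) := by
  have hrot : lam * exp (-(lam.arg * I)) = ‖lam‖ :=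
    calc lam * exp (-(lam.arg * I)) = ‖lam‖ * exp (lam.arg * I) * exp (-(lam.arg * I)) := by
          rw [norm_mul_exp_arg_mul_I]
      _ = ‖lam‖ := by rw [mul_assoc, ← exp_add, add_neg_cancel, exp_zero, mul_one]
  rw [show -(I * j * lam.arg) = j * -(lam.arg * I) by ring, exp_nat_mul, ← mul_pow, hrot]
  push_cast
  rfl

lemma pow_mul_star_dotProduct_mulVec_smul {n : ℕ} {x y : Fin n → ℂ}
    {P : Matrix (Fin n) (Fin n) ℂ} (hP : P ≠ 0)
    (hval : star y ⬝ᵥ P *ᵥ x = ((frobNorm P ^ 2 : ℝ) : ℂ))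
    (lam η : ℂ) (w : ℝ) (j : ℕ) :
    lam ^ j * (star y ⬝ᵥ (((η * w * exp (-(I * j * lam.arg))) / frobNorm P) • P) *ᵥ x)
      = η * ((w * frobNorm P * ‖lam‖ ^ j : ℝ) : ℂ) := by
  have hP' : (frobNorm P : ℂ) ≠ 0 := ofReal_ne_zero.mpr (frobNorm_pos hP).ne'
  rw [smul_mulVec, dotProduct_smul, smul_eq_mul, hval]
  calc lam ^ j * (η * w * exp (-(I * j * lam.arg)) / frobNorm P * ((frobNorm P ^ 2 : ℝ) : ℂ))
      = (lam ^ j * exp (-(I * j * lam.arg))) * (η * w * frobNorm P) := by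
        push_cast; field_simp
    _ = η * ((w * frobNorm P * ‖lam‖ ^ j : ℝ) : ℂ) := by
        rw [pow_mul_exp_neg_I_mul_nat_mul_arg]; push_cast; ring

theorem statement_9_general {n m : ℕ}
    (S : ℕ → Submodule ℂ (Matrix (Fin n) (Fin n) ℂ))
    (lam : ℂ) (x y : Fin n → ℂ)
    (p : ℕ → Matrix (Fin n) (Fin n) ℂ) (hpS : ∀ j, p j ∈ S j)
    (hproj : ∀ j, ∀ Z ∈ S j, frobInner (Matrix.vecMulVec y (star x) - p j) Z = 0)
    (hpne : ∀ j, j ≤ m → p j ≠ 0)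
    (ω : ℕ → ℝ) (hω : ∀ j, j ≤ m → 0 ≤ ω j)
    (η : ℂ) (hη : ‖η‖ = 1)
    (Δ : ℕ → Matrix (Fin n) (Fin n) ℂ)
    (hΔ : ∀ j, Δ j = ((η * (ω j : ℂ) *
      Complex.exp (-(Complex.I * (j : ℂ) * (lam.arg : ℂ)))) / (frobNorm (p j) : ℂ)) • p j) :
    (∀ j, j ≤ m → Δ j ∈ S j) ∧
    (∀ j, j ≤ m → frobNorm (Δ j) = ω j) ∧
    ‖∑ j ∈ Finset.range (m + 1),
        lam ^ j * dotProduct (star y) (Matrix.mulVec (Δ j) x)‖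
      = ∑ j ∈ Finset.range (m + 1), ω j * frobNorm (p j) * ‖lam‖ ^ j := by
  have hle : ∀ j ∈ Finset.range (m + 1), j ≤ m := fun j hj =>
    Nat.lt_succ_iff.mp (Finset.mem_range.mp hj)
  refine ⟨fun j _ => hΔ j ▸ Submodule.smul_mem _ _ (hpS j), fun j hj => ?_, ?_⟩
  · have hp := frobNorm_pos (hpne j hj)
    rw [hΔ j, frobNorm_smul, norm_div, norm_mul, norm_mul, hη, norm_exp_neg_I_mul_nat_mul_arg,
      norm_real, norm_real, Real.norm_of_nonneg (hω j hj), Real.norm_of_nonneg hp.le]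
    field_simp
  · have hterm : ∀ j ∈ Finset.range (m + 1), lam ^ j * star y ⬝ᵥ Δ j *ᵥ x
        = η * ((ω j * frobNorm (p j) * ‖lam‖ ^ j : ℝ) : ℂ) := fun j hj => by
      rw [hΔ j]
      exact pow_mul_star_dotProduct_mulVec_smul (hpne j (hle j hj))
        (star_dotProduct_mulVec_eq_frobNorm_sq (hproj j _ (hpS j))) lam η (ω j) j
    rw [Finset.sum_congr rfl hterm, ← Finset.mul_sum, ← ofReal_sum, norm_mul, hη, one_mul,
      norm_real, Real.norm_of_nonneg]
    refine Finset.sum_nonneg fun j hj => ?_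
    have := hω j (hle j hj)
    have := (frobNorm_pos (hpne j (hle j hj))).le
    positivity

/-- the maximal structured perturbations
`Δ_j = η ω_j e^{-i j arg(λ)} (y xᴴ)|_{S_j} / ‖(y xᴴ)|_{S_j}‖_F` belong to `S_j`,
have Frobenius norm `ω_j`, and attain
`|∑_{j=0}^m λ^j (yᴴ Δ_j x)| = ∑_{j=0}^m ω_j ‖(y xᴴ)|_{S_j}‖_F |λ|^j`.
Here `p j` denotes the orthogonal projection of `y xᴴ` onto `S_j`. -/
theorem statement_9 {n m : ℕ}
    (S : ℕ → Submodule ℂ (Matrix (Fin n) (Fin n) ℂ))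
    (lam : ℂ) (x y : Fin n → ℂ)
    (hx : ∑ i, ‖x i‖ ^ 2 = 1) (hy : ∑ i, ‖y i‖ ^ 2 = 1)
    (p : ℕ → Matrix (Fin n) (Fin n) ℂ) (hpS : ∀ j, p j ∈ S j)
    (hproj : ∀ j, ∀ Z ∈ S j, frobInner (Matrix.vecMulVec y (star x) - p j) Z = 0)
    (hpne : ∀ j, j ≤ m → p j ≠ 0)
    (ω : ℕ → ℝ) (hω : ∀ j, j ≤ m → 0 ≤ ω j)
    (η : ℂ) (hη : ‖η‖ = 1)
    (Δ : ℕ → Matrix (Fin n) (Fin n) ℂ)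
    (hΔ : ∀ j, Δ j = ((η * (ω j : ℂ) *
      Complex.exp (-(Complex.I * (j : ℂ) * (lam.arg : ℂ)))) / (frobNorm (p j) : ℂ)) • p j) :
    (∀ j, j ≤ m → Δ j ∈ S j) ∧
    (∀ j, j ≤ m → frobNorm (Δ j) = ω j) ∧
    ‖∑ j ∈ Finset.range (m + 1),
        lam ^ j * dotProduct (star y) (Matrix.mulVec (Δ j) x)‖
      = ∑ j ∈ Finset.range (m + 1), ω j * frobNorm (p j) * ‖lam‖ ^ j :=
  statement_9_general S lam x y p hpS hproj hpne ω hω η hη Δ hΔ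
end
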